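/- If T is a bounded operator on H, R a bounded operator on K, and there exists a bounded transformation X : H → K with dense range such that XT = RX, then the multiplicity of R is at most the multiplicity of T. -/

import Mathlib

noncomputable section
namespace Paper

variable {H K : Type} [NormedAddCommGroup H] [InnerProductSpace ℂ H] [CompleteSpace H]
  [NormedAddCommGroup K] [InnerProductSpace ℂ K] [CompleteSpace K]

/-- The smallest closed `T`-invariant subspace containing all the `x i`. -/
def orbitClosure {E : Type} [NormedAddCommGroup E] [InnerProductSpace ℂ E]
    (T : E →L[ℂ] E) {ι : Type} (x : ι → E) : Submodule ℂ E :=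
  (Submodule.span ℂ {y | ∃ (i : ι) (j : ℕ), y = (T ^ j) (x i)}).topologicalClosure

/-- The multiplicity `μ_T`: the minimal number of vectors whose `T`-orbit spans the space. -/
def multiplicity {E : Type} [NormedAddCommGroup E] [InnerProductSpace ℂ E]
    (T : E →L[ℂ] E) : Cardinal :=
  sInf {c : Cardinal | ∃ (ι : Type) (x : ι → E), orbitClosure T x = ⊤ ∧ c = Cardinal.mk ι}

/-! If `X T = R X`, then `X` maps the `T`-orbits of the `x i` onto the `R`-orbits of the
`X (x i)`, so by continuity it maps the closed span of the former into the closed span of the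
latter. When the former is everything, the latter contains the range of `X`, which is dense;
hence every family of cyclic vectors for `T` yields one of the same size for `R`. -/

section

variable {E F : Type} [NormedAddCommGroup E] [InnerProductSpace ℂ E]
  [NormedAddCommGroup F] [InnerProductSpace ℂ F]

theorem orbitClosure_id_eq_top (T : E →L[ℂ] E) : orbitClosure T id = ⊤ :=
  Submodule.eq_top_iff'.2 fun v =>
    Submodule.le_topologicalClosure _ (Submodule.subset_span ⟨v, 0, by simp⟩)

theorem isClosed_orbitClosure (T : E →L[ℂ] E) {ι : Type} (x : ι → E) :
    IsClosed (orbitClosure T x : Set E) :=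
  Submodule.isClosed_topologicalClosure _

variable {T : E →L[ℂ] E} {R : F →L[ℂ] F} {X : E →L[ℂ] F}

theorem orbitClosure_le_comap (hXTR : Function.Semiconj X T R) {ι : Type} (x : ι → E) :
    orbitClosure T x ≤ (orbitClosure R (X ∘ x)).comap (X : E →ₗ[ℂ] F) := by
  refine Submodule.topologicalClosure_minimal _ (Submodule.span_le.2 ?_)
    ((isClosed_orbitClosure R _).preimage X.continuous)
  rintro _ ⟨i, j, rfl⟩
  refine Submodule.le_topologicalClosure _ (Submodule.subset_span ⟨i, j, ?_⟩)
  simpa only [FunLike.coe_pow_eq_iterate, ContinuousLinearMap.coe_coe, Function.comp_apply]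
    using hXTR.iterate_right j (x i)

theorem orbitClosure_comp_eq_top (hXTR : Function.Semiconj X T R) (hX : DenseRange X)
    {ι : Type} {x : ι → E} (hx : orbitClosure T x = ⊤) : orbitClosure R (X ∘ x) = ⊤ := by
  rw [eq_top_iff, ← SetLike.coe_subset_coe, Submodule.top_coe, ← hX.closure_range,
    (isClosed_orbitClosure R _).closure_subset_iff]
  rintro _ ⟨v, rfl⟩
  exact orbitClosure_le_comap hXTR x (hx ▸ Submodule.mem_top)

theorem multiplicity_le_of_semiconj (hXTR : Function.Semiconj X T R) (hX : DenseRange X) :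
    multiplicity R ≤ multiplicity T := by
  -- `csInf_le_csInf` needs the `T`-set nonempty, since `sInf ∅ = 0` for cardinals.
  refine csInf_le_csInf (OrderBot.bddBelow _) ⟨_, E, id, orbitClosure_id_eq_top T, rfl⟩ ?_
  rintro _ ⟨ι, x, hx, rfl⟩
  exact ⟨ι, X ∘ x, orbitClosure_comp_eq_top hXTR hX hx, rfl⟩

end

theorem statement2_general
    (T : H →L[ℂ] H) (R : K →L[ℂ] K) (X : H →L[ℂ] K)
    (hX : DenseRange X) (hXTR : X.comp T = R.comp X) :
    multiplicity R ≤ multiplicity T :=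
  multiplicity_le_of_semiconj (fun v => congr($hXTR v)) hX

theorem statement2 [TopologicalSpace.SeparableSpace H] [TopologicalSpace.SeparableSpace K]
    (T : H →L[ℂ] H) (R : K →L[ℂ] K) (X : H →L[ℂ] K)
    (hX : DenseRange X) (hXTR : X.comp T = R.comp X) :
    multiplicity R ≤ multiplicity T :=
  statement2_general T R X hX hXTR

end Paper
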